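/- arXiv:1611.07474 — 2 statements merged into one kernel-verified Lean document; each statement's English description precedes it below -/
import Mathlib

section
/- For every matroid M of positive rank, the coefficient of t in P_M(t) equals the number of coatoms of the lattice of flats of M minus the number of atoms. -/
open Polynomial Finset

/-- A "pre-matroid": a finite ground set together with a rank function.
It is a matroid when `IsMatroid` holds. -/
structure PreMatroid (α : Type*) where
  E : Finset α
  r : Finset α → ℕ

namespace PreMatroid

variable {α : Type*} [DecidableEq α]

/-- The rank axioms for a rank function on the ground set `E`, extended to all finite
sets by `r A = r (A ∩ E)`. -/
def IsMatroid (M : PreMatroid α) : Prop :=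
  M.r ∅ = 0 ∧ (∀ A, M.r A ≤ A.card) ∧ (∀ A B, A ⊆ B → M.r A ≤ M.r B) ∧
    (∀ A B, M.r (A ∪ B) + M.r (A ∩ B) ≤ M.r A + M.r B) ∧ (∀ A, M.r (A ∩ M.E) = M.r A)

/-- The rank of a matroid. -/
def rk (M : PreMatroid α) : ℕ := M.r M.E

/-- The flats of a matroid: subsets of the ground set such that adding any new element of the
ground set increases the rank. -/
def flats (M : PreMatroid α) : Finset (Finset α) :=
  M.E.powerset.filter fun F => ∀ e ∈ M.E, e ∉ F → M.r F < M.r (insert e F)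

theorem subset_of_mem_flats {M : PreMatroid α} {F : Finset α} (hF : F ∈ M.flats) : F ⊆ M.E :=
  mem_powerset.mp (mem_filter.mp hF).1

/-- The Möbius function `μ(∅̂, F)` of the lattice of flats, where `∅̂` is the minimal flat:
`μ = 1` on the minimal flat, and on any other flat `F` it is minus the sum of the values of `μ`
on all flats strictly contained in `F`. -/
def mu (M : PreMatroid α) (F : Finset α) : ℤ :=
  if (M.flats.filter fun G => G ⊂ F).Nonempty then
    -∑ G ∈ (M.flats.filter fun G => G ⊂ F).attach, M.mu G.1
  else 1
termination_by F.card
decreasing_by exact Finset.card_lt_card (Finset.mem_filter.mp G.2).2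

/-- The characteristic polynomial `χ_M(t) = ∑_{F ∈ L(M)} μ(∅̂,F) t^{rk M - rk F}`. -/
noncomputable def charPoly (M : PreMatroid α) : Polynomial ℤ :=
  ∑ F ∈ M.flats, Polynomial.C (M.mu F) * Polynomial.X ^ (M.rk - M.r F)

/-- The localization `M_F`: the restriction of `M` to the flat `F`. -/
def loc (M : PreMatroid α) (F : Finset α) : PreMatroid α :=
  ⟨F, fun A => M.r (A ∩ F)⟩

/-- The contraction (restriction) `M^F` of `M` at the flat `F`, with ground set `E ∖ F` and
rank function `A ↦ r (A ∪ F) - r F`. -/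
def con (M : PreMatroid α) (F : Finset α) : PreMatroid α :=
  ⟨M.E \ F, fun A => M.r ((A ∩ (M.E \ F)) ∪ F) - M.r F⟩

theorem IsMatroid.con {M : PreMatroid α} (h : M.IsMatroid) {F : Finset α} (hF : F ⊆ M.E) :
    (M.con F).IsMatroid := by
  obtain ⟨h0, hle, hmono, hsub, hcomp⟩ := h
  refine ⟨?_, ?_, ?_, ?_, ?_⟩
  · show M.r ((∅ ∩ (M.E \ F)) ∪ F) - M.r F = 0
    simp
  · intro A
    show M.r ((A ∩ (M.E \ F)) ∪ F) - M.r F ≤ A.card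
    have h1 := hsub (A ∩ (M.E \ F)) F
    have h2 := hle (A ∩ (M.E \ F))
    have h3 : (A ∩ (M.E \ F)).card ≤ A.card := card_le_card inter_subset_left
    omega
  · intro A B hAB
    show M.r ((A ∩ (M.E \ F)) ∪ F) - M.r F ≤ M.r ((B ∩ (M.E \ F)) ∪ F) - M.r F
    have : (A ∩ (M.E \ F)) ∪ F ⊆ (B ∩ (M.E \ F)) ∪ F :=
      union_subset_union (inter_subset_inter hAB (Finset.Subset.refl _)) (Finset.Subset.refl _)
    exact Nat.sub_le_sub_right (hmono _ _ this) _
  · intro A B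
    set D := M.E \ F with hD
    show M.r (((A ∪ B) ∩ D) ∪ F) - M.r F + (M.r (((A ∩ B) ∩ D) ∪ F) - M.r F) ≤
      M.r ((A ∩ D) ∪ F) - M.r F + (M.r ((B ∩ D) ∪ F) - M.r F)
    have e1 : (A ∪ B) ∩ D ∪ F = ((A ∩ D) ∪ F) ∪ ((B ∩ D) ∪ F) := by
      ext x; simp; tauto
    have e2 : (A ∩ B) ∩ D ∪ F = ((A ∩ D) ∪ F) ∩ ((B ∩ D) ∪ F) := by
      ext x; simp; tauto
    have key := hsub ((A ∩ D) ∪ F) ((B ∩ D) ∪ F)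
    have m1 := hmono F ((A ∩ D) ∪ F) subset_union_right
    have m2 := hmono F ((B ∩ D) ∪ F) subset_union_right
    have m3 := hmono F ((A ∪ B) ∩ D ∪ F) subset_union_right
    have m4 := hmono F ((A ∩ B) ∩ D ∪ F) subset_union_right
    rw [← e1, ← e2] at key
    omega
  · intro A
    show M.r ((A ∩ (M.E \ F) ∩ (M.E \ F)) ∪ F) - M.r F = M.r ((A ∩ (M.E \ F)) ∪ F) - M.r F
    rw [inter_assoc, inter_self]

end PreMatroid

/-- The type of assignments, to each matroid (on any ground type), of a polynomial. -/
def KLfun : Type 1 := ∀ (α : Type) [DecidableEq α] (M : PreMatroid α), M.IsMatroid → Polynomial ℤ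

/-- The defining conditions of the Kazhdan-Lusztig polynomial of a matroid:
`P_M = 1` in rank zero, `deg P_M < (rk M)/2` in positive rank, and the defining recursion
`t^{rk M} P_M(1/t) = ∑_{F ∈ L(M)} χ_{M_F}(t) P_{M^F}(t)`. -/
def KLconds (P : KLfun) : Prop :=
  ∀ (α : Type) [DecidableEq α] (M : PreMatroid α) (h : M.IsMatroid),
    (M.rk = 0 → P α M h = 1) ∧
    (0 < M.rk → 2 * (P α M h).natDegree < M.rk) ∧
    ((P α M h).reflect M.rk =
      ∑ F ∈ M.flats.attach, (M.loc F.1).charPoly *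
        P α (M.con F.1) (h.con (PreMatroid.subset_of_mem_flats F.2)))

/-! Compare the coefficients of `t ^ (rk M - 1)` in the defining recursion. On the left this is
the linear coefficient of `P_M`. On the right, the degree bound `deg P_{M^F} < (rk M - rk F)/2`
makes the summand of a flat `F ≠ E` a polynomial of degree below `(rk F + rk M)/2`, which kills
every flat of corank at least two. The same bound, in top degree, shows that `P_N(0) = 1` for every `N`, so
`P_N = 1` when `rk N = 1`: a coatom `F` then contributes the leading coefficient `1` of
`χ_{M_F}`. Finally `F = E` contributes the coefficient of `t ^ (rk M - 1)` in `χ_M`, the sum of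
`μ` over the atoms, each of which has `μ = -1`. -/

namespace PreMatroid

variable {α : Type*} [DecidableEq α] {M : PreMatroid α} {F G : Finset α}

theorem mem_flats :
    F ∈ M.flats ↔ F ⊆ M.E ∧ ∀ e ∈ M.E, e ∉ F → M.r F < M.r (insert e F) := by
  rw [flats, mem_filter, mem_powerset]

theorem coeff_charPoly (M : PreMatroid α) (k : ℕ) :
    M.charPoly.coeff k = ∑ F ∈ M.flats with M.rk - M.r F = k, M.mu F := by
  rw [charPoly, finsetSum_coeff, sum_filter]
  refine sum_congr rfl fun F _ => ?_
  rw [coeff_C_mul, coeff_X_pow]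
  split_ifs <;> simp_all [eq_comm]

theorem natDegree_charPoly_le (M : PreMatroid α) : M.charPoly.natDegree ≤ M.rk :=
  natDegree_sum_le_of_forall_le _ _ fun _ _ =>
    (natDegree_C_mul_le _ _).trans ((natDegree_X_pow_le _).trans (Nat.sub_le _ _))

theorem rk_loc (M : PreMatroid α) (F : Finset α) : (M.loc F).rk = M.r F :=
  congrArg M.r (inter_self F)

theorem rk_con (hF : F ⊆ M.E) : (M.con F).rk = M.rk - M.r F := by
  change M.r ((M.E \ F) ∩ (M.E \ F) ∪ F) - M.r F = M.r M.E - M.r F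
  rw [inter_self, sdiff_union_of_subset hF]

theorem E_mem_flats (M : PreMatroid α) : M.E ∈ M.flats :=
  mem_flats.mpr ⟨subset_rfl, fun _ he hne => absurd he hne⟩

/-- The minimal flat `∅̂` of the lattice of flats. -/
def loops (M : PreMatroid α) : Finset α := M.E.filter fun e => M.r {e} = 0

namespace IsMatroid

theorem r_empty (h : M.IsMatroid) : M.r ∅ = 0 := h.1

theorem r_le_card (h : M.IsMatroid) (A : Finset α) : M.r A ≤ A.card := h.2.1 A

theorem r_mono (h : M.IsMatroid) {A B : Finset α} (hAB : A ⊆ B) : M.r A ≤ M.r B :=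
  h.2.2.1 A B hAB

theorem r_union_add_r_inter_le (h : M.IsMatroid) (A B : Finset α) :
    M.r (A ∪ B) + M.r (A ∩ B) ≤ M.r A + M.r B :=
  h.2.2.2.1 A B

theorem r_inter_E (h : M.IsMatroid) (A : Finset α) : M.r (A ∩ M.E) = M.r A := h.2.2.2.2 A

theorem loc (h : M.IsMatroid) (F : Finset α) : (M.loc F).IsMatroid := by
  refine ⟨?_, fun A => ?_, fun A B hAB => ?_, fun A B => ?_, fun A => ?_⟩
  · exact (congrArg M.r (empty_inter F)).trans h.r_empty
  · exact (h.r_le_card _).trans (card_le_card inter_subset_left)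
  · exact h.r_mono (inter_subset_inter hAB subset_rfl)
  · change M.r ((A ∪ B) ∩ F) + M.r ((A ∩ B) ∩ F) ≤ M.r (A ∩ F) + M.r (B ∩ F)
    rw [union_inter_distrib_right, inter_inter_distrib_right]
    exact h.r_union_add_r_inter_le _ _
  · change M.r ((A ∩ F) ∩ F) = M.r (A ∩ F)
    rw [inter_assoc, inter_self]

theorem loc_E (h : M.IsMatroid) : M.loc M.E = M := by
  obtain ⟨E, r⟩ := M
  change PreMatroid.mk E (fun A => r (A ∩ E)) = ⟨E, r⟩
  congr 1
  funext A
  exact h.r_inter_E A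

theorem r_le_rk (h : M.IsMatroid) (hF : F ⊆ M.E) : M.r F ≤ M.rk := h.r_mono hF

theorem r_lt_r_of_ssubset (h : M.IsMatroid) (hF : F ∈ M.flats) (hG : G ⊆ M.E) (hFG : F ⊂ G) :
    M.r F < M.r G := by
  obtain ⟨e, heG, heF⟩ := exists_of_ssubset hFG
  exact ((mem_flats.mp hF).2 e (hG heG) heF).trans_le
    (h.r_mono (insert_subset heG hFG.subset))

theorem eq_E_of_r_eq_rk (h : M.IsMatroid) (hF : F ∈ M.flats) (hr : M.r F = M.rk) :
    F = M.E := by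
  by_contra hne
  exact (h.r_lt_r_of_ssubset hF subset_rfl
    ((subset_of_mem_flats hF).ssubset_of_ne hne)).ne hr

theorem filter_flats_r_eq_rk (h : M.IsMatroid) :
    {F ∈ M.flats | M.r F = M.rk} = {M.E} := by
  ext F
  simp only [mem_filter, mem_singleton]
  exact ⟨fun ⟨hF, hr⟩ => h.eq_E_of_r_eq_rk hF hr, by rintro rfl; exact ⟨M.E_mem_flats, rfl⟩⟩

theorem r_eq_zero_of_subset_loops (h : M.IsMatroid) {A : Finset α} (hA : A ⊆ M.loops) :
    M.r A = 0 := by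
  induction A using Finset.induction_on with
  | empty => exact h.r_empty
  | insert a A _ ih =>
    have ha : M.r {a} = 0 := (mem_filter.mp (hA (mem_insert_self a A))).2
    have hA' : M.r A = 0 := ih ((subset_insert a A).trans hA)
    have := h.r_union_add_r_inter_le {a} A
    rw [insert_eq]
    omega

theorem loops_subset_of_mem_flats (h : M.IsMatroid) (hF : F ∈ M.flats) : M.loops ⊆ F := by
  intro e he
  obtain ⟨heE, he0⟩ := mem_filter.mp he
  by_contra heF
  have hlt := (mem_flats.mp hF).2 e heE heF
  have := h.r_union_add_r_inter_le {e} F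
  rw [← insert_eq] at this
  omega

theorem loops_mem_flats (h : M.IsMatroid) : M.loops ∈ M.flats := by
  refine mem_flats.mpr ⟨filter_subset _ _, fun e he hne => ?_⟩
  rw [h.r_eq_zero_of_subset_loops subset_rfl, Nat.pos_iff_ne_zero]
  intro h0
  have := h.r_mono (singleton_subset_iff.mpr (mem_insert_self e M.loops))
  exact hne (mem_filter.mpr ⟨he, by omega⟩)

theorem eq_loops_of_r_eq_zero (h : M.IsMatroid) (hF : F ∈ M.flats) (h0 : M.r F = 0) :
    F = M.loops := by
  refine (Subset.antisymm (fun e he => mem_filter.mpr ⟨subset_of_mem_flats hF he, ?_⟩)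
    (h.loops_subset_of_mem_flats hF))
  have := h.r_mono (singleton_subset_iff.mpr he)
  omega

theorem filter_flats_r_eq_zero (h : M.IsMatroid) :
    {F ∈ M.flats | M.r F = 0} = {M.loops} := by
  ext F
  simp only [mem_filter, mem_singleton]
  refine ⟨fun ⟨hF, h0⟩ => h.eq_loops_of_r_eq_zero hF h0, ?_⟩
  rintro rfl
  exact ⟨h.loops_mem_flats, h.r_eq_zero_of_subset_loops subset_rfl⟩

theorem mu_loops (h : M.IsMatroid) : M.mu M.loops = 1 := by
  rw [mu, if_neg]
  rintro ⟨G, hG⟩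
  obtain ⟨hGf, hGlt⟩ := mem_filter.mp hG
  exact hGlt.not_subset (h.loops_subset_of_mem_flats hGf)

theorem mu_eq_neg_one_of_r_eq_one (h : M.IsMatroid) (hF : F ∈ M.flats) (h1 : M.r F = 1) :
    M.mu F = -1 := by
  have hbelow : {G ∈ M.flats | G ⊂ F} = {M.loops} := by
    ext G
    simp only [mem_filter, mem_singleton]
    constructor
    · rintro ⟨hG, hGF⟩
      have := h.r_lt_r_of_ssubset hG (subset_of_mem_flats hF) hGF
      exact h.eq_loops_of_r_eq_zero hG (by omega)
    · rintro rfl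
      refine ⟨h.loops_mem_flats, (h.loops_subset_of_mem_flats hF).ssubset_of_ne ?_⟩
      rintro rfl
      rw [h.r_eq_zero_of_subset_loops subset_rfl] at h1
      exact zero_ne_one h1
  rw [mu, hbelow, if_pos (singleton_nonempty _), sum_attach {M.loops} M.mu, sum_singleton,
    h.mu_loops]

theorem coeff_charPoly_rk (h : M.IsMatroid) : M.charPoly.coeff M.rk = 1 := by
  rw [coeff_charPoly]
  have : {F ∈ M.flats | M.rk - M.r F = M.rk} = {F ∈ M.flats | M.r F = 0} :=
    filter_congr fun F hF => by have := h.r_le_rk (subset_of_mem_flats hF); omega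
  rw [this, h.filter_flats_r_eq_zero, sum_singleton, h.mu_loops]

theorem coeff_charPoly_rk_sub_one (h : M.IsMatroid) (hrk : 0 < M.rk) :
    M.charPoly.coeff (M.rk - 1) = -(#{F ∈ M.flats | M.r F = 1} : ℤ) := by
  rw [coeff_charPoly]
  have : {F ∈ M.flats | M.rk - M.r F = M.rk - 1} = {F ∈ M.flats | M.r F = 1} :=
    filter_congr fun F hF => by have := h.r_le_rk (subset_of_mem_flats hF); omega
  rw [this, sum_congr rfl fun F hF =>
    h.mu_eq_neg_one_of_r_eq_one (mem_filter.mp hF).1 (mem_filter.mp hF).2]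
  simp

end IsMatroid

end PreMatroid

namespace KLconds

open PreMatroid

variable {P : KLfun} {α : Type} [DecidableEq α] {M : PreMatroid α}

theorem eq_one_of_rk_eq_zero (hP : KLconds P) (h : M.IsMatroid) (h0 : M.rk = 0) :
    P α M h = 1 :=
  (hP α M h).1 h0

theorem coeff_eq_sum_coeff (hP : KLconds P) (h : M.IsMatroid) {i : ℕ} (hi : i ≤ M.rk) :
    (P α M h).coeff i = ∑ F ∈ M.flats.attach,
      ((M.loc F.1).charPoly * P α (M.con F.1) (h.con (subset_of_mem_flats F.2))).coeff
        (M.rk - i) := by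
  rw [← finsetSum_coeff, ← (hP α M h).2.2, coeff_reflect, revAt_le (Nat.sub_le _ _),
    Nat.sub_sub_self hi]

theorem two_mul_natDegree_summand_lt (hP : KLconds P) {F : Finset α} (hF : F ⊆ M.E)
    (hc : (M.con F).IsMatroid) (hlt : M.r F < M.rk) :
    2 * ((M.loc F).charPoly * P α (M.con F) hc).natDegree < M.r F + M.rk := by
  have hχ : (M.loc F).charPoly.natDegree ≤ M.r F := rk_loc M F ▸ natDegree_charPoly_le _
  have hdeg := (hP α (M.con F) hc).2.1 (by rw [rk_con hF]; omega)
  rw [rk_con hF] at hdeg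
  have := natDegree_mul_le (p := (M.loc F).charPoly) (q := P α (M.con F) hc)
  omega

theorem coeff_summand_eq_zero (hP : KLconds P) {F : Finset α} (hF : F ⊆ M.E)
    (hc : (M.con F).IsMatroid) (hlt : M.r F < M.rk) {k : ℕ} (hk : M.r F + M.rk ≤ 2 * k) :
    ((M.loc F).charPoly * P α (M.con F) hc).coeff k = 0 :=
  coeff_eq_zero_of_natDegree_lt (by have := hP.two_mul_natDegree_summand_lt hF hc hlt; omega)

theorem summand_E (hP : KLconds P) (h : M.IsMatroid) (hc : (M.con M.E).IsMatroid) :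
    (M.loc M.E).charPoly * P α (M.con M.E) hc = M.charPoly := by
  rw [hP.eq_one_of_rk_eq_zero hc (by rw [rk_con subset_rfl]; exact Nat.sub_self _), mul_one, h.loc_E]

theorem coeff_zero (hP : KLconds P) (h : M.IsMatroid) : (P α M h).coeff 0 = 1 := by
  rw [hP.coeff_eq_sum_coeff h (Nat.zero_le _), Nat.sub_zero,
    sum_eq_single_of_mem ⟨M.E, M.E_mem_flats⟩ (mem_attach _ _), hP.summand_E h,
    h.coeff_charPoly_rk]
  rintro ⟨F, hF⟩ - hne
  have hlt : M.r F < M.rk := h.r_lt_r_of_ssubset hF subset_rfl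
    ((subset_of_mem_flats hF).ssubset_of_ne fun hFE => hne (Subtype.ext hFE))
  exact hP.coeff_summand_eq_zero (subset_of_mem_flats hF) _ hlt (by omega)

theorem eq_one_of_rk_eq_one (hP : KLconds P) (h : M.IsMatroid) (h1 : M.rk = 1) :
    P α M h = 1 := by
  have hdeg := (hP α M h).2.1 (by omega)
  rw [eq_C_of_natDegree_eq_zero (p := P α M h) (by omega), hP.coeff_zero h, map_one]

theorem coeff_summand_rk_sub_one (hP : KLconds P) (h : M.IsMatroid) (hrk : 0 < M.rk)
    {F : Finset α} (hF : F ∈ M.flats) (hc : (M.con F).IsMatroid) :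
    ((M.loc F).charPoly * P α (M.con F) hc).coeff (M.rk - 1) =
      (if M.r F = M.rk - 1 then 1 else 0) +
        (if M.r F = M.rk then -(#{G ∈ M.flats | M.r G = 1} : ℤ) else 0) := by
  have hFE := subset_of_mem_flats hF
  have hle : M.r F ≤ M.rk := h.r_le_rk hFE
  by_cases hE : M.r F = M.rk
  · obtain rfl := h.eq_E_of_r_eq_rk hF hE
    rw [hP.summand_E h, h.coeff_charPoly_rk_sub_one hrk, if_neg (by omega), if_pos hE, zero_add]
  by_cases hcoatom : M.r F = M.rk - 1
  · have hχ : (M.loc F).charPoly.coeff (M.rk - 1) = 1 := by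
      rw [← hcoatom, ← rk_loc M F, (h.loc F).coeff_charPoly_rk]
    rw [hP.eq_one_of_rk_eq_one hc (by rw [rk_con hFE]; omega), mul_one, hχ, if_pos hcoatom,
      if_neg hE, add_zero]
  · rw [if_neg hcoatom, if_neg hE, add_zero]
    exact hP.coeff_summand_eq_zero hFE hc (by omega) (by omega)

end KLconds

/-- For every matroid `M` of positive rank, the coefficient of `t` in
`P_M(t)` equals the number of coatoms of the lattice of flats (flats of rank `rk M - 1`)
minus the number of atoms (flats of rank `1`). -/
theorem kl_linear_term (P : KLfun) (hP : KLconds P)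
    (α : Type) [DecidableEq α] (M : PreMatroid α) (h : M.IsMatroid) (hrk : 0 < M.rk) :
    (P α M h).coeff 1 =
      ((M.flats.filter fun F => M.r F = M.rk - 1).card : ℤ) -
        ((M.flats.filter fun F => M.r F = 1).card : ℤ) := by
  rw [hP.coeff_eq_sum_coeff h hrk,
    sum_congr rfl fun F _ => hP.coeff_summand_rk_sub_one h hrk F.2 _,
    sum_attach M.flats fun F => (if M.r F = M.rk - 1 then (1 : ℤ) else 0) +
      (if M.r F = M.rk then -(#{G ∈ M.flats | M.r G = 1} : ℤ) else 0),
    sum_add_distrib, sum_boole, ← sum_filter, h.filter_flats_r_eq_rk, sum_singleton,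
    sub_eq_add_neg]
end

section
/- For d > 0, the Kazhdan-Lusztig polynomial of the uniform matroid U_{1,d} (the rank-d uniform matroid on d+1 elements, i.e., the cycle matroid of the (d+1)-cycle) is P_{U_{1,d}}(t) = \sum_{i \ge 0} (1/(i+1)) \binom{d-i-1}{i} \binom{d+1}{i} t^i. -/
/-!
The flats of `U_{1,d}` are its ground set and the sets of size `j < d`. Localizing at a small
flat gives a Boolean matroid, with characteristic polynomial `(t - 1)^j`, and contracting it
gives `U_{1,d-j}`. The KL recursion therefore reads
`t^d P_d(1/t) = χ_d(t) + ∑_{j<d} C(d+1,j) (t-1)^j P_{d-j}(t)`,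
and its `j = 0` term is `P_d` itself. Since `deg P_d < d/2`, the coefficients of `t^{d-i}` with
`2i < d` determine `P_d` from the `P_{d-j}` with `j ≥ 1`, so by strong induction on `d` it
suffices that the claimed polynomials satisfy the recursion in these degrees. Expanding
`(t-1)^j`, the inner sums `∑_s (-1)^s C(E+1,s) c(E-s,m)` over the claimed coefficients collapse
to `(-1)^E (C(E+1,m) - C(E+1,m+1))`, and what remains are partial alternating sums of rows of
Pascal's triangle.
-/

open Polynomial Finset

/-- The uniform matroid `U_{m,d}` of rank `d` on `m + d` elements, as a rank function. -/
def uniformPre (m d : ℕ) : PreMatroid ℕ :=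
  ⟨Finset.range (m + d), fun A => min (A ∩ Finset.range (m + d)).card d⟩

theorem uniformPre_isMatroid (m d : ℕ) : (uniformPre m d).IsMatroid := by
  refine ⟨by simp [uniformPre], ?_, ?_, ?_, ?_⟩
  · intro A
    exact le_trans (Nat.min_le_left _ _) (card_le_card inter_subset_left)
  · intro A B hAB
    exact min_le_min (card_le_card (inter_subset_inter hAB (Finset.Subset.refl _))) le_rfl
  · intro A B
    simp only [uniformPre]
    set E := Finset.range (m + d)
    have e1 : (A ∪ B) ∩ E = (A ∩ E) ∪ (B ∩ E) := by ext x; simp only [mem_inter, mem_union]; tauto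
    have e2 : (A ∩ B) ∩ E = (A ∩ E) ∩ (B ∩ E) := by ext x; simp only [mem_inter]; tauto
    have key : ((A ∩ E) ∪ (B ∩ E)).card + ((A ∩ E) ∩ (B ∩ E)).card
        = (A ∩ E).card + (B ∩ E).card := card_union_add_card_inter _ _
    have m1 : (A ∩ E).card ≤ ((A ∩ E) ∪ (B ∩ E)).card := card_le_card subset_union_left
    have m2 : (B ∩ E).card ≤ ((A ∩ E) ∪ (B ∩ E)).card := card_le_card subset_union_right
    rw [e1, e2]
    simp only [Nat.min_def]
    split_ifs <;> omega
  · intro A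
    simp only [uniformPre]
    rw [inter_assoc, inter_self]

lemma Polynomial.coeff_eq_of_reflect_eq_add {R : Type*} [Semiring R] {p r : R[X]} {d n : ℕ}
    (hp : 2 * p.natDegree < d) (h : p.reflect d = p + r) (hn : 2 * n < d) :
    p.coeff n = r.coeff (d - n) := by
  have := congrArg (coeff · (d - n)) h
  simp only [coeff_reflect, coeff_add, revAt_le (Nat.sub_le d n),
    Nat.sub_sub_self (by omega : n ≤ d)] at this
  rwa [coeff_eq_zero_of_natDegree_lt (by omega : p.natDegree < d - n), zero_add] at this

lemma Polynomial.coeff_X_sub_one_pow_mul {R : Type*} [Ring R] (q : R[X]) (j n : ℕ) :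
    ((X - 1) ^ j * q).coeff n
      = ∑ k ∈ range (n + 1), (-1) ^ (j - k) * (j.choose k : R) * q.coeff (n - k) := by
  rw [coeff_mul, Nat.sum_antidiagonal_eq_sum_range_succ_mk, sub_eq_add_neg, ← C_1, ← C_neg]
  simp_rw [coeff_X_add_C_pow]

namespace KLUniformOne

lemma alternating_sum_range_choose_eq_choose (n M : ℕ) :
    ∑ k ∈ range (M + 1), (-1 : ℚ) ^ k * ((n + 1).choose k : ℚ)
      = (-1) ^ M * (n.choose M : ℚ) := by
  exact_mod_cast Int.alternating_sum_range_choose_eq_choose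

lemma alternating_sum_range_choose_of_ne {n : ℕ} (hn : n ≠ 0) :
    ∑ k ∈ range (n + 1), (-1 : ℚ) ^ k * (n.choose k : ℚ) = 0 := by
  exact_mod_cast Int.alternating_sum_range_choose_of_ne hn

lemma alternating_sum_range_choose_succ_succ (n i : ℕ) :
    ∑ m ∈ range (i + 1), (-1 : ℚ) ^ m * ((n + 1).choose (m + 1) : ℚ)
      = 1 + (-1) ^ i * (n.choose (i + 1) : ℚ) := by
  have h := alternating_sum_range_choose_eq_choose n (i + 1)
  simp_rw [sum_range_succ' _ (i + 1), pow_succ] at h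
  simp only [pow_zero, Nat.choose_zero_right, Nat.cast_one, mul_one] at h
  simp_rw [mul_neg_one, neg_mul, sum_neg_distrib] at h
  linear_combination -h

lemma choose_add_mul_choose (N s u : ℕ) :
    N.choose (s + u) * (s + u).choose s = N.choose s * (N - s).choose u := by
  simpa using Nat.choose_mul (n := N) (Nat.le_add_right s u)

lemma neg_one_pow_sub_one_sub {R : Type*} [Ring R] {B u : ℕ} (h : u < B) :
    (-1 : R) ^ (B - 1 - u) = -(-1) ^ B * (-1) ^ u := by
  obtain ⟨c, rfl⟩ : ∃ c, B = c + u + 1 := ⟨B - u - 1, by omega⟩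
  rw [show c + u + 1 - 1 - u = c by omega, pow_succ, pow_add, mul_neg_one, neg_neg, mul_assoc,
    ← pow_add, ← two_mul, pow_mul, neg_one_sq, one_pow, mul_one]

lemma alternating_sum_choose_mul_choose_eq_one (m : ℕ) {B : ℕ} (hB : B ≠ 0) :
    ∑ u ∈ range B,
        (-1 : ℚ) ^ u * ((m + B).choose (m + u + 1) : ℚ) * ((m + u).choose m : ℚ) = 1 := by
  induction B with
  | zero => exact absurd rfl hB
  | succ B ih =>
    rcases Nat.eq_zero_or_pos B with rfl | hpos
    · simp
    -- Pascal's rule splits the sum; the first half collapses to a full alternating row sum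
    have hrow : ∑ u ∈ range (B + 1),
        (-1 : ℚ) ^ u * ((m + B).choose (m + u) : ℚ) * ((m + u).choose m : ℚ) = 0 := by
      have habs : ∀ u, ((m + B).choose (m + u) : ℚ) * ((m + u).choose m : ℚ)
          = ((m + B).choose m : ℚ) * (B.choose u : ℚ) := fun u => by
        exact_mod_cast (choose_add_mul_choose (m + B) m u).trans (by rw [Nat.add_sub_cancel_left])
      simp_rw [mul_assoc, habs, mul_left_comm _ ((m + B).choose m : ℚ), ← mul_sum,
        alternating_sum_range_choose_of_ne hpos.ne', mul_zero]
    have hlast : ((m + B).choose (m + B + 1) : ℚ) = 0 := by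
      rw [Nat.choose_eq_zero_of_lt (by omega), Nat.cast_zero]
    calc _ = ∑ u ∈ range (B + 1),
          (-1 : ℚ) ^ u * ((m + B).choose (m + u) : ℚ) * ((m + u).choose m : ℚ)
          + ∑ u ∈ range (B + 1),
          (-1 : ℚ) ^ u * ((m + B).choose (m + u + 1) : ℚ) * ((m + u).choose m : ℚ) := by
          rw [← sum_add_distrib]
          refine sum_congr rfl fun u _ => ?_
          rw [← add_assoc, Nat.choose_succ_succ', Nat.cast_add]
          ring
      _ = 1 := by rw [hrow, sum_range_succ, hlast, ih hpos.ne']; ring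

lemma alternating_sum_choose_mul_choose_eq_self (m B : ℕ) :
    ∑ u ∈ range B,
        (-1 : ℚ) ^ u * ((m + B + 1).choose (m + u + 2) : ℚ) * ((m + u).choose m : ℚ) = B := by
  induction B with
  | zero => simp
  | succ B ih =>
    have hlast : ((m + B + 1).choose (m + B + 2) : ℚ) = 0 := by
      rw [Nat.choose_eq_zero_of_lt (by omega), Nat.cast_zero]
    calc _ = ∑ u ∈ range (B + 1),
          (-1 : ℚ) ^ u * ((m + (B + 1)).choose (m + u + 1) : ℚ) * ((m + u).choose m : ℚ)
          + ∑ u ∈ range (B + 1),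
          (-1 : ℚ) ^ u * ((m + B + 1).choose (m + u + 2) : ℚ) * ((m + u).choose m : ℚ) := by
          rw [← sum_add_distrib]
          refine sum_congr rfl fun u _ => ?_
          rw [show m + (B + 1) + 1 = m + B + 1 + 1 by ring, show m + u + 2 = m + u + 1 + 1 by ring,
            Nat.choose_succ_succ', Nat.cast_add, ← add_assoc]
          ring
      _ = (B + 1 : ℕ) := by
          rw [alternating_sum_choose_mul_choose_eq_one m B.succ_ne_zero, sum_range_succ, hlast, ih]
          push_cast; ring

/-- The claimed coefficient of `t ^ i` in `P_{U_{1,d}}(t)`. -/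
noncomputable def klCoeff (d i : ℕ) : ℚ :=
  ((d + 1).choose i : ℚ) * ((d - i - 1).choose i : ℚ) / (i + 1)

lemma klCoeff_eq_zero {d i : ℕ} (h : d ≤ 2 * i) (hi : 0 < i) : klCoeff d i = 0 := by
  rw [klCoeff, Nat.choose_eq_zero_of_lt (by omega : d - i - 1 < i)]
  simp

/-- The alternating binomial transform of `klCoeff · m`; it appears when the powers of `t - 1`
in the KL recursion are expanded. -/
noncomputable def klAltSum (E m : ℕ) : ℚ :=
  ∑ s ∈ range E, (-1) ^ s * ((E + 1).choose s : ℚ) * klCoeff (E - s) m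

lemma klAltSum_eq_zero {E m : ℕ} (h : E < 2 * m) : klAltSum E m = 0 :=
  sum_eq_zero fun s _ => by rw [klCoeff_eq_zero (by omega) (by omega), mul_zero]

lemma klAltSum_eq {E m : ℕ} (h : 2 * m ≤ E) :
    klAltSum E m = (-1) ^ E * (((E + 1).choose m : ℚ) - ((E + 1).choose (m + 1) : ℚ)) := by
  rw [klAltSum]
  obtain ⟨B, rfl⟩ : ∃ B, E = B + 2 * m := ⟨E - 2 * m, by omega⟩
  have htail : ∑ x ∈ range (2 * m),
      (-1 : ℚ) ^ (B + x) * ((B + 2 * m + 1).choose (B + x) : ℚ)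
        * klCoeff (B + 2 * m - (B + x)) m = 0 :=
    sum_eq_zero fun x hx => by
      rw [klCoeff_eq_zero (by omega) (by simp at hx; omega), mul_zero]
  -- after reversing the order, `s = B - 1 - u`, the `u`-th term absorbs into the sum of
  -- `alternating_sum_choose_mul_choose_eq_self`
  have hterm : ∀ u ∈ range B,
      (-1 : ℚ) ^ (B - 1 - u) * ((B + 2 * m + 1).choose (B - 1 - u) : ℚ)
          * klCoeff (B + 2 * m - (B - 1 - u)) m
        = -(-1) ^ B * (((B + 2 * m + 1).choose m : ℚ) / (m + 1)) *
          ((-1) ^ u * ((m + B + 1).choose (m + u + 2) : ℚ) * ((m + u).choose m : ℚ)) := by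
    intro u hu
    have hu : u < B := mem_range.mp hu
    have hsymm : (B + 2 * m + 1).choose (B - 1 - u) = (B + 2 * m + 1).choose (m + (m + u + 2)) :=
      Nat.choose_symm_of_eq_add (by omega)
    have habs :
        ((B + 2 * m + 1).choose (m + (m + u + 2)) : ℚ) * ((m + (m + u + 2)).choose m : ℚ)
        = ((B + 2 * m + 1).choose m : ℚ) * ((m + B + 1).choose (m + u + 2) : ℚ) := by
      rw [show m + B + 1 = B + 2 * m + 1 - m by omega]
      exact_mod_cast choose_add_mul_choose _ _ _
    rw [neg_one_pow_sub_one_sub hu, hsymm, klCoeff,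
      show B + 2 * m - (B - 1 - u) - m - 1 = m + u by omega,
      show B + 2 * m - (B - 1 - u) + 1 = m + (m + u + 2) by omega]
    linear_combination (-(-1) ^ B * (-1) ^ u * ((m + u).choose m : ℚ) / (m + 1)) * habs
  have hpascal : ((B + 2 * m + 1).choose (m + 1) : ℚ) * (m + 1)
      = ((B + 2 * m + 1).choose m : ℚ) * (m + B + 1) := by
    have := Nat.choose_succ_right_eq (B + 2 * m + 1) m
    rw [show B + 2 * m + 1 - m = m + B + 1 by omega] at this
    exact_mod_cast this
  rw [sum_range_add, htail, add_zero, ← sum_range_reflect, sum_congr rfl hterm, ← mul_sum,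
    alternating_sum_choose_mul_choose_eq_self, pow_add, pow_mul, neg_one_sq, one_pow, mul_one]
  field_simp
  linear_combination hpascal

lemma klCoeff_eq_sub {d i : ℕ} (h : 2 * i < d) :
    klCoeff d i = ((d + 1).choose (d - i) : ℚ) * ((d - i - 1).choose i : ℚ)
      - ((d + 1).choose i : ℚ) * ((d - i).choose (i + 1) : ℚ) := by
  have hsymm : (d + 1).choose (d - i) = (d + 1).choose (i + 1) :=
    Nat.choose_symm_of_eq_add (by omega)
  have h1 : ((d + 1).choose (i + 1) : ℚ) * (i + 1) = ((d + 1).choose i : ℚ) * (d + 1 - i) := by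
    have := congrArg (Nat.cast : ℕ → ℚ) (Nat.choose_succ_right_eq (d + 1) i)
    push_cast [Nat.cast_sub (by omega : i ≤ d + 1)] at this
    exact this
  have h2 : ((d - i : ℕ) : ℚ) * ((d - i - 1).choose i : ℚ)
      = ((d - i).choose (i + 1) : ℚ) * (i + 1) := by
    have := Nat.add_one_mul_choose_eq (d - i - 1) i
    rw [show d - i - 1 + 1 = d - i by omega] at this
    exact_mod_cast this
  rw [Nat.cast_sub (by omega : i ≤ d)] at h2
  rw [klCoeff, hsymm]
  field_simp
  linear_combination -((d - i - 1).choose i : ℚ) * h1 - ((d + 1).choose i : ℚ) * h2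

noncomputable def klPoly (d : ℕ) : ℚ[X] := ∑ i ∈ range (d + 1), C (klCoeff d i) * X ^ i

lemma coeff_klPoly (d n : ℕ) : (klPoly d).coeff n = klCoeff d n := by
  simp only [klPoly, finsetSum_coeff, coeff_C_mul, coeff_X_pow, mul_ite, mul_one, mul_zero,
    sum_ite_eq, mem_range]
  split_ifs with h
  · rfl
  · exact (klCoeff_eq_zero (by omega) (by omega)).symm

lemma sum_choose_mul_choose_eq_choose_mul_sum (a : ℕ → ℚ) {d k : ℕ} (hk : k ≤ d) :
    ∑ j ∈ range d, ((d + 1).choose j : ℚ) * ((-1) ^ (j - k) * (j.choose k : ℚ) * a (d - j))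
      = ((d + 1).choose k : ℚ) *
        ∑ s ∈ range (d - k), (-1) ^ s * ((d - k + 1).choose s : ℚ) * a (d - k - s) := by
  obtain ⟨e, rfl⟩ : ∃ e, d = k + e := ⟨d - k, by omega⟩
  rw [sum_range_add, sum_eq_zero fun j hj => by
    rw [Nat.choose_eq_zero_of_lt (mem_range.mp hj), Nat.cast_zero, mul_zero, zero_mul, mul_zero],
    zero_add, Nat.add_sub_cancel_left, mul_sum]
  refine sum_congr rfl fun s _ => ?_
  have habs : ((k + e + 1).choose (k + s) : ℚ) * ((k + s).choose k : ℚ)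
      = ((k + e + 1).choose k : ℚ) * ((e + 1).choose s : ℚ) := by
    rw [show e + 1 = k + e + 1 - k by omega]
    exact_mod_cast choose_add_mul_choose _ _ _
  rw [Nat.add_sub_cancel_left, show k + e - (k + s) = e - s by omega]
  linear_combination ((-1) ^ s * a (e - s)) * habs

lemma coeff_sum_choose_smul_X_sub_one_pow_mul (q : ℕ → ℚ[X]) {d n : ℕ} (hn : n ≤ d) :
    (∑ j ∈ range d, (d + 1).choose j • ((X - 1) ^ j * q (d - j))).coeff n
      = ∑ k ∈ range (n + 1), ((d + 1).choose k : ℚ) *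
        ∑ s ∈ range (d - k),
          (-1) ^ s * ((d - k + 1).choose s : ℚ) * (q (d - k - s)).coeff (n - k) := by
  simp_rw [finsetSum_coeff, coeff_smul, nsmul_eq_mul, coeff_X_sub_one_pow_mul, mul_sum]
  rw [sum_comm]
  refine sum_congr rfl fun k hk => ?_
  exact (sum_choose_mul_choose_eq_choose_mul_sum (fun e => (q e).coeff (n - k))
    (by simp at hk; omega)).trans (mul_sum ..)

/-- `χ_{U_{m,d}}(t)`; its constant term is the Möbius value of the ground set. -/
noncomputable def uniformCharPoly (m d : ℕ) : ℤ[X] :=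
  ∑ j ∈ range d, C ((-1) ^ j * ((m + d).choose j : ℤ)) * X ^ (d - j)
    + C ((-1) ^ d * ((m + d - 1).choose (d - 1) : ℤ))

lemma coeff_uniformCharPoly {m d n : ℕ} (hn : 0 < n) (hnd : n ≤ d) :
    (uniformCharPoly m d).coeff n = (-1) ^ (d - n) * ((m + d).choose (d - n) : ℤ) := by
  rw [uniformCharPoly, coeff_add, finsetSum_coeff, coeff_C, if_neg hn.ne', add_zero,
    sum_eq_single (d - n)]
  · rw [coeff_C_mul, coeff_X_pow, if_pos (by omega), mul_one]
  · intro j _ hj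
    rw [coeff_C_mul, coeff_X_pow, if_neg (by omega), mul_zero]
  · intro h
    exact absurd (mem_range.mpr (by omega)) h

lemma uniformCharPoly_zero_left (n : ℕ) : uniformCharPoly 0 n = (X - 1) ^ n := by
  rw [uniformCharPoly, sub_eq_neg_add, ← C_1, ← C_neg, add_pow, sum_range_succ, zero_add,
    Nat.choose_self, Nat.sub_self, pow_zero, Nat.choose_self]
  congr 1
  · refine sum_congr rfl fun j _ => ?_
    simp only [map_mul, map_pow, C_neg, C_1, map_natCast]
    ring
  · simp

lemma sum_choose_mul_klAltSum {i n : ℕ} (h : i < n) :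
    ∑ k ∈ range (n + 1), ((i + n + 1).choose k : ℚ) * klAltSum (i + n - k) (n - k)
      = klCoeff (i + n) i - (-1) ^ i * ((i + n + 1).choose i : ℚ) := by
  have hvanish : ∀ m ∈ range (n + 1), m ∉ range (i + 1) →
      ((i + n + 1).choose (n - m) : ℚ) * klAltSum (i + n - (n - m)) (n - (n - m)) = 0 :=
    fun m hm hmi => by
      rw [klAltSum_eq_zero (by simp only [mem_range] at hm hmi; omega), mul_zero]
  have hmain : ∀ m ∈ range (i + 1),
      ((i + n + 1).choose (n - m) : ℚ) * klAltSum (i + n - (n - m)) (n - (n - m))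
      = (-1) ^ i * (((i + n + 1).choose n : ℚ) * ((-1) ^ m * (n.choose m : ℚ))
        - ((i + n + 1).choose i : ℚ) * ((-1) ^ m * ((n + 1).choose (m + 1) : ℚ))) := by
    intro m hm
    have hm : m ≤ i := Nat.lt_succ_iff.mp (mem_range.mp hm)
    have habsA : ((i + n + 1).choose (n - m) : ℚ) * ((i + m + 1).choose m : ℚ)
        = ((i + n + 1).choose n : ℚ) * (n.choose m : ℚ) := by
      have := choose_add_mul_choose (i + n + 1) (n - m) m
      rw [Nat.sub_add_cancel (by omega), Nat.choose_symm (by omega),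
        show i + n + 1 - (n - m) = i + m + 1 by omega] at this
      exact_mod_cast this.symm
    have habsB : ((i + n + 1).choose (n - m) : ℚ) * ((i + m + 1).choose (m + 1) : ℚ)
        = ((i + n + 1).choose i : ℚ) * ((n + 1).choose (m + 1) : ℚ) := by
      have := choose_add_mul_choose (i + n + 1) (n - m) (m + 1)
      rw [show n - m + (m + 1) = n + 1 by omega,
        Nat.choose_symm_of_eq_add (show i + n + 1 = (n + 1) + i by ring),
        Nat.choose_symm_of_eq_add (show n + 1 = (n - m) + (m + 1) by omega),
        show i + n + 1 - (n - m) = i + m + 1 by omega] at this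
      exact_mod_cast this.symm
    rw [show i + n - (n - m) = i + m by omega, show n - (n - m) = m by omega,
      klAltSum_eq (by omega), pow_add]
    linear_combination (-1) ^ i * (-1) ^ m * habsA - (-1) ^ i * (-1) ^ m * habsB
  have hA : ∑ m ∈ range (i + 1), (-1 : ℚ) ^ m * (n.choose m : ℚ)
      = (-1) ^ i * ((n - 1).choose i : ℚ) := by
    simpa [Nat.sub_add_cancel (by omega : 1 ≤ n)]
      using alternating_sum_range_choose_eq_choose (n - 1) i
  have hpow : (-1 : ℚ) ^ i * (-1) ^ i = 1 := by rw [← mul_pow]; simp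
  rw [← sum_range_reflect, Nat.add_sub_cancel,
    ← sum_subset (range_subset_range.mpr (by omega : i + 1 ≤ n + 1)) hvanish,
    sum_congr rfl hmain, ← mul_sum,
    sum_sub_distrib, ← mul_sum, ← mul_sum, hA, alternating_sum_range_choose_succ_succ,
    klCoeff_eq_sub (by omega), Nat.add_sub_cancel_left]
  linear_combination (((i + n + 1).choose n : ℚ) * ((n - 1).choose i : ℚ)
    - ((i + n + 1).choose i : ℚ) * (n.choose (i + 1) : ℚ)) * hpow

/-- The claimed polynomials satisfy the KL recursion of `U_{1,d}` in the degrees `d - i > d / 2`,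
which are the ones that determine `P_{U_{1,d}}`. -/
theorem klCoeff_eq_coeff {d i : ℕ} (h : 2 * i < d) :
    klCoeff d i = (∑ j ∈ Ico 1 d, (d + 1).choose j • ((X - 1) ^ j * klPoly (d - j))
      + (uniformCharPoly 1 d).map (Int.castRingHom ℚ)).coeff (d - i) := by
  obtain ⟨n, rfl⟩ : ∃ n, d = i + n := ⟨d - i, by omega⟩
  have hχ : ((uniformCharPoly 1 (i + n)).map (Int.castRingHom ℚ)).coeff n
      = (-1) ^ i * ((i + n + 1).choose i : ℚ) := by
    rw [coeff_map, coeff_uniformCharPoly (by omega) (by omega), Nat.add_sub_cancel,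
      add_comm 1 (i + n)]
    simp
  have hIco : (∑ j ∈ Ico 1 (i + n),
        (i + n + 1).choose j • ((X - 1) ^ j * klPoly (i + n - j))).coeff n
      = (∑ j ∈ range (i + n),
        (i + n + 1).choose j • ((X - 1) ^ j * klPoly (i + n - j))).coeff n := by
    rw [sum_range_eq_add_Ico _ (by omega), coeff_add, pow_zero, one_mul, Nat.sub_zero,
      coeff_smul, coeff_klPoly, klCoeff_eq_zero (by omega) (by omega), smul_zero, zero_add]
  rw [Nat.add_sub_cancel_left, coeff_add, hIco,
    coeff_sum_choose_smul_X_sub_one_pow_mul _ (by omega), hχ]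
  simp_rw [coeff_klPoly, ← klAltSum.eq_1]
  rw [sum_choose_mul_klAltSum (by omega)]
  ring

end KLUniformOne

namespace PreMatroid

open KLUniformOne

variable {α : Type*} [DecidableEq α] {M : PreMatroid α} {m d : ℕ} {F : Finset α}

def IsUniform (m d : ℕ) (M : PreMatroid α) : Prop :=
  M.E.card = m + d ∧ ∀ A, M.r A = min (A ∩ M.E).card d

lemma isUniform_uniformPre (m d : ℕ) : IsUniform m d (uniformPre m d) :=
  ⟨card_range _, fun _ => rfl⟩

lemma mu_eq_ite (M : PreMatroid α) (F : Finset α) :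
    M.mu F = if (M.flats.filter (· ⊂ F)).Nonempty then
      -∑ G ∈ M.flats.filter (· ⊂ F), M.mu G else 1 := by
  rw [mu, sum_attach _ M.mu]

lemma mu_eq_neg_one_pow_card (hF : ∀ G ⊂ F, G ∈ M.flats) : M.mu F = (-1) ^ F.card := by
  induction F using Finset.strongInduction with
  | H F ih =>
  have hfilter : M.flats.filter (· ⊂ F) = F.powerset.erase F := by
    ext G
    simp only [mem_filter, mem_erase, mem_powerset]
    exact ⟨fun ⟨_, hG⟩ => ⟨hG.ne, hG.subset⟩,
      fun ⟨hne, hsub⟩ => ⟨hF G (hsub.ssubset_of_ne hne), hsub.ssubset_of_ne hne⟩⟩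
  rw [mu_eq_ite, hfilter]
  rcases F.eq_empty_or_nonempty with rfl | hne
  · simp
  have hsum : ∑ G ∈ F.powerset.erase F, M.mu G = ∑ G ∈ F.powerset.erase F, (-1) ^ G.card :=
    sum_congr rfl fun G hG => by
      have hGF : G ⊂ F :=
        (mem_powerset.mp (mem_of_mem_erase hG)).ssubset_of_ne (ne_of_mem_erase hG)
      exact ih G hGF fun H hH => hF H (hH.trans hGF)
  rw [if_pos ⟨∅, mem_erase.mpr ⟨hne.ne_empty.symm, empty_mem_powerset F⟩⟩, hsum,
    sum_erase_eq_sub (mem_powerset_self F), sum_powerset_neg_one_pow_card, if_neg hne.ne_empty]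
  ring

lemma con_empty (h : M.IsMatroid) : M.con ∅ = M := by
  obtain ⟨E, r⟩ := M
  obtain ⟨h0, -, -, -, hE⟩ := h
  simp only [con, sdiff_empty, union_empty, mk.injEq, true_and]
  funext A
  rw [show r ∅ = 0 from h0, Nat.sub_zero]
  exact hE A

lemma rk_con_ground (M : PreMatroid α) : (M.con M.E).rk = 0 := by
  simp [rk, con]

namespace IsUniform

lemma r_of_subset (hM : IsUniform m d M) {A : Finset α} (hA : A ⊆ M.E) :
    M.r A = min A.card d := by
  rw [hM.2, inter_eq_left.mpr hA]

lemma rk_eq (hM : IsUniform m d M) : M.rk = d := by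
  rw [rk, hM.r_of_subset subset_rfl, hM.1]
  omega

lemma mem_flats (hM : IsUniform m d M) :
    F ∈ M.flats ↔ F ⊆ M.E ∧ (F.card < d ∨ F = M.E) := by
  simp only [flats, mem_filter, mem_powerset, and_congr_right_iff]
  intro hF
  have hins : ∀ e ∈ M.E, e ∉ F → M.r (insert e F) = min (F.card + 1) d := fun e he heF => by
    rw [hM.r_of_subset (insert_subset he hF), card_insert_of_notMem heF]
  constructor
  · intro hflat
    by_contra! hne
    obtain ⟨e, he, heF⟩ := exists_of_ssubset (hF.ssubset_of_ne hne.2)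
    have := hflat e he heF
    rw [hins e he heF, hM.r_of_subset hF] at this
    omega
  · rintro (hlt | rfl) e he heF
    · rw [hins e he heF, hM.r_of_subset hF]
      omega
    · exact absurd he heF

lemma ground_notMem_biUnion (hM : IsUniform m d M) :
    M.E ∉ (range d).biUnion (M.E.powersetCard ·) := by
  simp only [mem_biUnion, mem_range, mem_powersetCard, not_exists, not_and]
  intro j hj _ hcard
  rw [hM.1] at hcard
  omega

lemma flats_eq (hM : IsUniform m d M) :
    M.flats = insert M.E ((range d).biUnion (M.E.powersetCard ·)) := by
  ext F
  simp only [hM.mem_flats, mem_insert, mem_biUnion, mem_range, mem_powersetCard]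
  constructor
  · rintro ⟨hF, hlt | rfl⟩
    · exact Or.inr ⟨F.card, hlt, hF, rfl⟩
    · exact Or.inl rfl
  · rintro (rfl | ⟨j, hj, hF, rfl⟩)
    · exact ⟨subset_rfl, Or.inr rfl⟩
    · exact ⟨hF, Or.inl hj⟩

lemma sum_flats {β : Type*} [AddCommMonoid β] (hM : IsUniform m d M) (g : Finset α → β) :
    ∑ F ∈ M.flats, g F = g M.E + ∑ j ∈ range d, ∑ F ∈ M.E.powersetCard j, g F := by
  rw [hM.flats_eq, sum_insert hM.ground_notMem_biUnion,
    sum_biUnion (M.E.pairwise_disjoint_powersetCard.set_pairwise _)]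

lemma mu_of_card_lt (hM : IsUniform m d M) (hF : F ⊆ M.E) (hlt : F.card < d) :
    M.mu F = (-1) ^ F.card :=
  mu_eq_neg_one_pow_card fun _ hG =>
    hM.mem_flats.mpr ⟨hG.subset.trans hF, Or.inl ((card_lt_card hG).trans hlt)⟩

lemma filter_ssubset_ground (hM : IsUniform m d M) :
    M.flats.filter (· ⊂ M.E) = (range d).biUnion (M.E.powersetCard ·) := by
  rw [hM.flats_eq, filter_insert, if_neg (ssubset_irrefl _), filter_true_of_mem]
  intro G hG
  obtain ⟨j, hj, hGE, hcard⟩ := by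
    simpa only [mem_biUnion, mem_range, mem_powersetCard] using hG
  refine hGE.ssubset_of_ne fun h => ?_
  rw [h, hM.1] at hcard
  omega

/-- At `d = 0` the truncated subtractions make the right side `1`, the Möbius value of the
only flat. -/
lemma mu_ground (hM : IsUniform m d M) :
    M.mu M.E = (-1) ^ d * ((m + d - 1).choose (d - 1) : ℤ) := by
  rw [mu_eq_ite, hM.filter_ssubset_ground]
  rcases d with _ | e
  · simp
  have hterm : ∀ j ∈ range (e + 1), ∑ G ∈ M.E.powersetCard j, M.mu G
      = (-1) ^ j * ((m + (e + 1)).choose j : ℤ) := fun j hj => by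
    rw [sum_congr rfl fun G hG => hM.mu_of_card_lt (mem_powersetCard.mp hG).1
        (((mem_powersetCard.mp hG).2).trans_lt (mem_range.mp hj)),
      sum_congr rfl fun G hG => by rw [(mem_powersetCard.mp hG).2], sum_const,
      card_powersetCard, hM.1, nsmul_eq_mul, mul_comm]
  rw [if_pos ⟨∅, mem_biUnion.mpr ⟨0, mem_range.mpr e.succ_pos, by simp⟩⟩,
    sum_biUnion (M.E.pairwise_disjoint_powersetCard.set_pairwise _), sum_congr rfl hterm,
    show m + (e + 1) = m + e + 1 by ring, Int.alternating_sum_range_choose_eq_choose,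
    Nat.add_sub_cancel, Nat.add_sub_cancel, pow_succ]
  ring

lemma charPoly_eq (hM : IsUniform m d M) : M.charPoly = uniformCharPoly m d := by
  have hterm : ∀ j ∈ range d, ∑ F ∈ M.E.powersetCard j, C (M.mu F) * X ^ (M.rk - M.r F)
      = C ((-1) ^ j * ((m + d).choose j : ℤ)) * X ^ (d - j) := fun j hj => by
    have hF : ∀ F ∈ M.E.powersetCard j, C (M.mu F) * X ^ (M.rk - M.r F)
        = C ((-1) ^ j : ℤ) * X ^ (d - j) := fun F hF => by
      obtain ⟨hFE, hcard⟩ := mem_powersetCard.mp hF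
      have hlt : F.card < d := hcard.trans_lt (mem_range.mp hj)
      rw [hM.mu_of_card_lt hFE hlt, hM.rk_eq, hM.r_of_subset hFE, min_eq_left hlt.le, hcard]
    rw [sum_congr rfl hF, sum_const, card_powersetCard, hM.1, nsmul_eq_mul, C_mul, C_pow,
      map_natCast]
    ring
  rw [charPoly, hM.sum_flats, sum_congr rfl hterm, hM.mu_ground, hM.rk_eq,
    hM.r_of_subset subset_rfl, hM.1, min_eq_right (Nat.le_add_left d m), Nat.sub_self, pow_zero,
    mul_one, uniformCharPoly, add_comm]

lemma loc_ground (hM : IsUniform m d M) : IsUniform m d (M.loc M.E) :=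
  ⟨hM.1, fun A => by simp only [loc, hM.2, inter_assoc, inter_self]⟩

lemma loc (hM : IsUniform m d M) (hF : F ⊆ M.E) (hFd : F.card ≤ d) :
    IsUniform 0 F.card (M.loc F) := by
  refine ⟨(zero_add _).symm, fun A => ?_⟩
  simp only [PreMatroid.loc]
  rw [hM.r_of_subset (inter_subset_right.trans hF),
    min_eq_left ((card_le_card inter_subset_right).trans hFd),
    min_eq_left (card_le_card inter_subset_right)]

lemma con (hM : IsUniform m d M) (hF : F ⊆ M.E) (hFd : F.card ≤ d) :
    IsUniform m (d - F.card) (M.con F) := by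
  refine ⟨?_, fun A => ?_⟩
  · simp only [PreMatroid.con]
    rw [card_sdiff_of_subset hF, hM.1]
    omega
  · simp only [PreMatroid.con]
    have hdisj : Disjoint (A ∩ (M.E \ F)) F :=
      disjoint_of_subset_left inter_subset_right sdiff_disjoint
    rw [hM.r_of_subset (union_subset (inter_subset_right.trans sdiff_subset) hF),
      hM.r_of_subset hF, card_union_of_disjoint hdisj]
    omega

end IsUniform

end PreMatroid

namespace KLfun

open PreMatroid KLUniformOne

variable (P : KLfun) {α : Type} [DecidableEq α] {M : PreMatroid α}

open Classical in
/-- `P` as a function of `M` alone: junk value `0` when `M` is not a matroid. -/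
noncomputable def poly (M : PreMatroid α) : ℤ[X] := if h : M.IsMatroid then P α M h else 0

lemma poly_eq (h : M.IsMatroid) : P.poly M = P α M h := dif_pos h

variable {P}

lemma poly_eq_one (hP : KLconds P) (h : M.IsMatroid) (hrk : M.rk = 0) : P.poly M = 1 := by
  rw [P.poly_eq h, (hP α M h).1 hrk]

lemma natDegree_poly_lt (hP : KLconds P) (h : M.IsMatroid) (hrk : 0 < M.rk) :
    2 * (P.poly M).natDegree < M.rk := by
  rw [P.poly_eq h]
  exact (hP α M h).2.1 hrk

lemma reflect_poly (hP : KLconds P) (h : M.IsMatroid) :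
    (P.poly M).reflect M.rk = ∑ F ∈ M.flats, (M.loc F).charPoly * P.poly (M.con F) := by
  rw [P.poly_eq h, (hP α M h).2.2, ← sum_attach M.flats]
  exact sum_congr rfl fun F _ => by rw [P.poly_eq (h.con (subset_of_mem_flats F.2))]

/-- The KL recursion for `U_{m,d}`: the flats are the sets of size `j < d`, with Boolean
localizations, and the ground set, whose contraction has rank `0`. -/
lemma reflect_poly_of_isUniform (hP : KLconds P) (h : M.IsMatroid) {m d : ℕ}
    (hM : IsUniform m d M) :
    (P.poly M).reflect d = uniformCharPoly m d
      + ∑ j ∈ range d, (X - 1) ^ j * ∑ F ∈ M.E.powersetCard j, P.poly (M.con F) := by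
  have hrec := reflect_poly hP h
  rw [hM.rk_eq] at hrec
  rw [hrec, hM.sum_flats, hM.loc_ground.charPoly_eq,
    poly_eq_one hP (h.con subset_rfl) (rk_con_ground M), mul_one]
  refine congrArg _ (sum_congr rfl fun j hj => ?_)
  rw [mul_sum]
  refine sum_congr rfl fun F hF => ?_
  obtain ⟨hFE, hcard⟩ := mem_powersetCard.mp hF
  rw [(hM.loc hFE (hcard.trans_lt (mem_range.mp hj)).le).charPoly_eq, uniformCharPoly_zero_left,
    hcard]

theorem map_poly_eq_klPoly (hP : KLconds P) (d : ℕ) :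
    ∀ {M : PreMatroid α}, M.IsMatroid → IsUniform 1 d M →
      (P.poly M).map (Int.castRingHom ℚ) = klPoly d := by
  induction d using Nat.strong_induction_on with
  | _ d ih =>
  intro M h hM
  rcases d.eq_zero_or_pos with rfl | hd
  · rw [poly_eq_one hP h hM.rk_eq, Polynomial.map_one]
    simp [klPoly, klCoeff]
  have hcon : ∀ j ∈ Ico 1 d,
      ((X - 1) ^ j * ∑ F ∈ M.E.powersetCard j, P.poly (M.con F)).map (Int.castRingHom ℚ)
        = (d + 1).choose j • ((X - 1) ^ j * klPoly (d - j)) := fun j hj => by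
    obtain ⟨hj1, hjd⟩ := mem_Ico.mp hj
    have hF : ∀ F ∈ M.E.powersetCard j,
        (P.poly (M.con F)).map (Int.castRingHom ℚ) = klPoly (d - j) := fun F hF => by
      obtain ⟨hFE, hcard⟩ := mem_powersetCard.mp hF
      rw [← hcard]
      exact ih _ (by omega) (h.con hFE) (hM.con hFE (by omega))
    rw [Polynomial.map_mul, Polynomial.map_sum, sum_congr rfl hF, sum_const, card_powersetCard,
      hM.1, add_comm 1 d, mul_smul_comm]
    simp
  have hrec : ((P.poly M).map (Int.castRingHom ℚ)).reflect d
      = (P.poly M).map (Int.castRingHom ℚ)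
        + (∑ j ∈ Ico 1 d, (d + 1).choose j • ((X - 1) ^ j * klPoly (d - j))
          + (uniformCharPoly 1 d).map (Int.castRingHom ℚ)) := by
    rw [reflect_map, reflect_poly_of_isUniform hP h hM, Polynomial.map_add,
      sum_range_eq_add_Ico _ hd, Polynomial.map_add, Polynomial.map_sum, sum_congr rfl hcon,
      powersetCard_zero, sum_singleton, con_empty h, pow_zero, one_mul]
    abel
  have hdeg : 2 * ((P.poly M).map (Int.castRingHom ℚ)).natDegree < d := by
    have := natDegree_poly_lt hP h (by rwa [hM.rk_eq])
    rw [hM.rk_eq] at this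
    exact (Nat.mul_le_mul_left 2 natDegree_map_le).trans_lt this
  ext n
  rw [coeff_klPoly]
  by_cases hn : 2 * n < d
  · rw [coeff_eq_of_reflect_eq_add hdeg hrec hn, ← klCoeff_eq_coeff hn]
  · rw [coeff_eq_zero_of_natDegree_lt (by omega), klCoeff_eq_zero (by omega) (by omega)]

end KLfun

theorem kl_uniform_one_general (P : KLfun) (hP : KLconds P) (d : ℕ) (i : ℕ) :
    ((P ℕ (uniformPre 1 d) (uniformPre_isMatroid 1 d)).coeff i : ℚ) =
      (1 / (i + 1) : ℚ) * ((d - i - 1).choose i) * ((d + 1).choose i) := by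
  have h := KLfun.map_poly_eq_klPoly hP d (uniformPre_isMatroid 1 d)
    (PreMatroid.isUniform_uniformPre 1 d)
  rw [KLfun.poly_eq P (uniformPre_isMatroid 1 d)] at h
  have := congrArg (coeff · i) h
  simp only [coeff_map, KLUniformOne.coeff_klPoly, eq_intCast] at this
  rw [this, KLUniformOne.klCoeff]
  ring

/-- For `d > 0`, the Kazhdan-Lusztig polynomial of the uniform matroid
`U_{1,d}` is `P_{U_{1,d}}(t) = ∑_{i ≥ 0} (1/(i+1)) C(d-i-1, i) C(d+1, i) t^i`. -/
theorem kl_uniform_one (P : KLfun) (hP : KLconds P) (d : ℕ) (hd : 0 < d) (i : ℕ) :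
    ((P ℕ (uniformPre 1 d) (uniformPre_isMatroid 1 d)).coeff i : ℚ) =
      (1 / (i + 1) : ℚ) * ((d - i - 1).choose i) * ((d + 1).choose i) :=
  kl_uniform_one_general P hP d i
end
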